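/- arXiv:1909.04103 — 2 statements merged into one kernel-verified Lean document; each statement's English description precedes it below -/
import Mathlib

section
/- Let q₁ = [A₁,B₁,C₁] and q₂ = [A₂,B₂,C₂] be PIBQFs with discriminants D₁, D₂ satisfying B_Δ(q₁,q₂)² < D₁D₂. Then (B₁A₂ − B₂A₁)·q₁(q_{2,f}, 1) > 0, where q₁(q_{2,f},1) = A₁q_{2,f}² + B₁q_{2,f} + C₁; that is, the sign of the intersection equals the sign of the value of q₁ at the first root of q₂. -/
/-- A binary quadratic form `[A,B,C]`, encoded as a triple of integers. -/
abbrev BQF := ℤ × ℤ × ℤ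

/-- The discriminant `B² - 4AC` of a binary quadratic form `[A,B,C]`. -/
def disc (q : BQF) : ℤ := q.2.1 ^ 2 - 4 * q.1 * q.2.2

/-- A binary quadratic form is primitive if `gcd(A,B,C) = 1`. -/
def IsPrimitiveBQF (q : BQF) : Prop := Int.gcd q.1 (Int.gcd q.2.1 q.2.2) = 1

/-- A primitive indefinite binary quadratic form: primitive, of positive
nonsquare discriminant. -/
def IsPIBQF (q : BQF) : Prop := IsPrimitiveBQF q ∧ 0 < disc q ∧ ¬ IsSquare (disc q)

abbrev SL2Z := Matrix.SpecialLinearGroup (Fin 2) ℤ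

/-- The action of `SL(2,ℤ)` on binary quadratic forms:
`(γ ∘ q)(x,y) = q(ax + by, cx + dy)`. -/
def actForm (γ : SL2Z) (q : BQF) : BQF :=
  ((q.1 * (γ.1 0 0)^2 + q.2.1 * (γ.1 0 0) * (γ.1 1 0) + q.2.2 * (γ.1 1 0)^2),
   (2 * q.1 * (γ.1 0 0) * (γ.1 0 1) + q.2.1 * ((γ.1 0 0) * (γ.1 1 1) + (γ.1 0 1) * (γ.1 1 0))
      + 2 * q.2.2 * (γ.1 1 0) * (γ.1 1 1)),
   (q.1 * (γ.1 0 1)^2 + q.2.1 * (γ.1 0 1) * (γ.1 1 1) + q.2.2 * (γ.1 1 1)^2))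

/-- Equivalence of binary quadratic forms under `SL(2,ℤ)`. -/
def equivF (q q' : BQF) : Prop := ∃ γ : SL2Z, actForm γ q = q'

/-- `B_Δ(q₁,q₂) = B₁B₂ - 2A₁C₂ - 2A₂C₁`. -/
def BΔ (q₁ q₂ : BQF) : ℤ := q₁.2.1 * q₂.2.1 - 2 * q₁.1 * q₂.2.2 - 2 * q₂.1 * q₁.2.2

/-- A fundamental discriminant. -/
def IsFundamentalDisc (D : ℤ) : Prop :=
  (D % 4 = 1 ∧ Squarefree D) ∨
    (∃ m : ℤ, D = 4 * m ∧ Squarefree m ∧ (m % 4 = 2 ∨ m % 4 = 3))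

/-- The Kronecker symbol `(a / p)` for a prime `p`. -/
def kron (a : ℤ) (p : ℕ) : ℤ :=
  if p = 2 then (if a % 2 = 0 then 0 else if a % 8 = 1 ∨ a % 8 = 7 then 1 else -1)
  else jacobiSym a p

/-- `ε(p)`: the nonzero value among the Kronecker symbols `(D₁/p)`, `(D₂/p)`. -/
def epsP (D₁ D₂ : ℤ) (p : ℕ) : ℤ := if kron D₁ p = 0 then kron D₂ p else kron D₁ p

/-- The multiplicative extension of `ε` to positive integers. -/
def epsMul (D₁ D₂ : ℤ) (d : ℕ) : ℤ :=
  d.factorization.prod fun p k => (epsP D₁ D₂ p) ^ k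

/-- Pairs of primitive forms of discriminants `D₁, D₂` with `B_Δ = n`. -/
def PairSet (D₁ D₂ n : ℤ) : Type :=
  {p : BQF × BQF // IsPrimitiveBQF p.1 ∧ IsPrimitiveBQF p.2 ∧
    disc p.1 = D₁ ∧ disc p.2 = D₂ ∧ BΔ p.1 p.2 = n}

/-- Simultaneous `SL(2,ℤ)`-equivalence of pairs. -/
def pairRel (D₁ D₂ n : ℤ) (x y : PairSet D₁ D₂ n) : Prop :=
  ∃ γ : SL2Z, actForm γ x.1.1 = y.1.1 ∧ actForm γ x.1.2 = y.1.2

/-- `p(n)`: the number of simultaneous equivalence classes of pairs of primitive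
forms of discriminants `D₁, D₂` with `B_Δ = n`. -/
noncomputable def pCount (D₁ D₂ n : ℤ) : ℕ := Nat.card (Quot (pairRel D₁ D₂ n))

/-- The root geodesic of an indefinite form, as a subset of the upper half plane. -/
def rootGeodesic (q : BQF) : Set ℂ :=
  {z : ℂ | 0 < z.im ∧
    (q.1 : ℝ) * Complex.normSq z + (q.2.1 : ℝ) * z.re + (q.2.2 : ℝ) = 0}

/-- The first root `(-B + √D)/(2A)` of a PIBQF. -/
noncomputable def firstRoot (q : BQF) : ℝ :=
  (-(q.2.1 : ℝ) + Real.sqrt (disc q)) / (2 * q.1)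

/-- The second root `(-B - √D)/(2A)` of a PIBQF. -/
noncomputable def secondRoot (q : BQF) : ℝ :=
  (-(q.2.1 : ℝ) - Real.sqrt (disc q)) / (2 * q.1)

/-!
Write `Δ = B₁A₂ - B₂A₁`, `E = A₁D₂ - A₂B_Δ` and `s = √D₂`. Substituting the first root
`r = (-B₂ + s)/(2A₂)` into `q₁` gives `4A₂² q₁(r, 1) = 2(E + Δs)`, while the identity
`Δ²D₂ - E² = A₂²(D₁D₂ - B_Δ²)` turns the hypothesis into `E² < (Δs)²`.
Then `Δs` dominates `E` in absolute value, so `Δ(E + Δs) > 0`.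
-/

noncomputable def bqfEval (q : BQF) (x : ℝ) : ℝ := q.1 * x ^ 2 + q.2.1 * x + q.2.2

/-- `B₁A₂ - B₂A₁`, whose sign is the sign of the intersection of the root geodesics. -/
def crossAB (q₁ q₂ : BQF) : ℤ := q₁.2.1 * q₂.1 - q₂.2.1 * q₁.1

lemma fst_ne_zero_of_not_isSquare_disc {q : BQF} (h : ¬ IsSquare (disc q)) : q.1 ≠ 0 := by
  intro hA
  exact h ⟨q.2.1, by simp [disc, hA, sq]⟩

lemma two_mul_fst_mul_firstRoot {q : BQF} (hA : q.1 ≠ 0) :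
    2 * q.1 * firstRoot q = -q.2.1 + √(disc q) := by
  unfold firstRoot
  field_simp

lemma four_mul_fst_sq_mul_bqfEval_firstRoot (q₁ : BQF) {q₂ : BQF} (hA : q₂.1 ≠ 0)
    (hD : 0 ≤ disc q₂) :
    4 * (q₂.1 : ℝ) ^ 2 * bqfEval q₁ (firstRoot q₂) =
      2 * (((q₁.1 * disc q₂ - q₂.1 * BΔ q₁ q₂ : ℤ) : ℝ) + crossAB q₁ q₂ * √(disc q₂)) := by
  have hr := two_mul_fst_mul_firstRoot hA
  have hs : √(disc q₂ : ℝ) ^ 2 = disc q₂ := Real.sq_sqrt (by exact_mod_cast hD)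
  set r := firstRoot q₂
  set s := √(disc q₂ : ℝ)
  obtain ⟨a₁, b₁, c₁⟩ := q₁
  obtain ⟨a₂, b₂, c₂⟩ := q₂
  simp only [bqfEval, crossAB, BΔ, disc] at *
  push_cast at *
  linear_combination (a₁ * (2 * a₂ * r - b₂ + s) + 2 * b₁ * a₂) * hr + a₁ * hs

lemma crossAB_sq_mul_disc_sub_sq (q₁ q₂ : BQF) :
    crossAB q₁ q₂ ^ 2 * disc q₂ - (q₁.1 * disc q₂ - q₂.1 * BΔ q₁ q₂) ^ 2 =
      q₂.1 ^ 2 * (disc q₁ * disc q₂ - BΔ q₁ q₂ ^ 2) := by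
  simp only [crossAB, BΔ, disc]
  ring

lemma sq_lt_crossAB_sq_mul_disc {q₁ q₂ : BQF} (hA : q₂.1 ≠ 0)
    (h : BΔ q₁ q₂ ^ 2 < disc q₁ * disc q₂) :
    (q₁.1 * disc q₂ - q₂.1 * BΔ q₁ q₂) ^ 2 < crossAB q₁ q₂ ^ 2 * disc q₂ := by
  have := mul_pos (sq_pos_of_ne_zero hA) (sub_pos.2 h)
  linarith [crossAB_sq_mul_disc_sub_sq q₁ q₂]

lemma mul_add_mul_pos_of_sq_lt_sq {R : Type*} [CommRing R] [LinearOrder R]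
    [IsStrictOrderedRing R]
    {Δ E s : R} (hs : 0 ≤ s) (h : E ^ 2 < (Δ * s) ^ 2) : 0 < Δ * (E + Δ * s) := by
  have habs : |E| < |Δ| * s := by
    rw [← abs_of_nonneg hs, ← abs_mul]
    exact sq_lt_sq.1 h
  have hΔ : 0 < |Δ| := pos_of_mul_pos_left ((abs_nonneg E).trans_lt habs) hs
  calc 0 < |Δ| * (|Δ| * s - |E|) := mul_pos hΔ (sub_pos.2 habs)
    _ = Δ ^ 2 * s - |Δ * E| := by rw [abs_mul, ← sq_abs]; ring
    _ ≤ Δ * (E + Δ * s) := by linear_combination neg_abs_le (Δ * E)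

theorem sign_eq_sign_of_value_at_first_root_general
    (q₁ q₂ : BQF) (h₂ : IsPIBQF q₂)
    (h : (BΔ q₁ q₂) ^ 2 < disc q₁ * disc q₂) :
    0 < ((q₁.2.1 * q₂.1 - q₂.2.1 * q₁.1 : ℤ) : ℝ) *
      ((q₁.1 : ℝ) * (firstRoot q₂) ^ 2 + (q₁.2.1 : ℝ) * firstRoot q₂ + (q₁.2.2 : ℝ)) := by
  obtain ⟨-, hD, hns⟩ := h₂
  have hA := fst_ne_zero_of_not_isSquare_disc hns
  have hE : ((q₁.1 * disc q₂ - q₂.1 * BΔ q₁ q₂ : ℤ) : ℝ) ^ 2 <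
      ((crossAB q₁ q₂ : ℝ) * √(disc q₂)) ^ 2 := by
    rw [mul_pow, Real.sq_sqrt (by exact_mod_cast hD.le)]
    exact_mod_cast sq_lt_crossAB_sq_mul_disc hA h
  have hpos := mul_add_mul_pos_of_sq_lt_sq (Real.sqrt_nonneg _) hE
  have h4 : 0 < 4 * (q₂.1 : ℝ) ^ 2 * (crossAB q₁ q₂ * bqfEval q₁ (firstRoot q₂)) := by
    rw [mul_left_comm, four_mul_fst_sq_mul_bqfEval_firstRoot q₁ hA hD.le]
    linarith
  exact pos_of_mul_pos_right h4 (by positivity)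

/-- Remark 7 of the paper.
If the root geodesics of `q₁, q₂` intersect, the sign of the intersection
`sign(B₁A₂ - B₂A₁)` equals the sign of `q₁(q_{2,f}, 1)`. -/
theorem sign_eq_sign_of_value_at_first_root
    (q₁ q₂ : BQF) (h₁ : IsPIBQF q₁) (h₂ : IsPIBQF q₂)
    (h : (BΔ q₁ q₂) ^ 2 < disc q₁ * disc q₂) :
    0 < ((q₁.2.1 * q₂.1 - q₂.2.1 * q₁.1 : ℤ) : ℝ) *
      ((q₁.1 : ℝ) * (firstRoot q₂) ^ 2 + (q₁.2.1 : ℝ) * firstRoot q₂ + (q₁.2.2 : ℝ)) :=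
  sign_eq_sign_of_value_at_first_root_general q₁ q₂ h₂ h
end

section
/- Let q₁ and q₂ be PIBQFs with discriminants D₁ and D₂. Then the quotient set {(q₁′,q₂′) : q₁ ∼ q₁′, q₂ ∼ q₂′, B_Δ(q₁′,q₂′)² < D₁D₂}/∼₂ is finite. -/
/-- Pairs `(q₁',q₂')` with `qᵢ ∼ qᵢ'` whose root geodesics intersect, i.e.
`B_Δ(q₁',q₂')² < D₁D₂`. -/
def IntPairSet (q₁ q₂ : BQF) : Type :=
  {p : BQF × BQF // equivF q₁ p.1 ∧ equivF q₂ p.2 ∧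
    (BΔ p.1 p.2) ^ 2 < disc q₁ * disc q₂}

/-- Simultaneous `SL(2,ℤ)`-equivalence of such pairs. -/
def intPairRel (q₁ q₂ : BQF) (x y : IntPairSet q₁ q₂) : Prop :=
  ∃ γ : SL2Z, actForm γ x.1.1 = y.1.1 ∧ actForm γ x.1.2 = y.1.2

/-- The unweighted intersection number `Int(q₁,q₂)` (via Proposition 1 of the
paper, used here as the definition). -/
noncomputable def IntNum (q₁ q₂ : BQF) : ℕ :=
  Nat.card (Quot (intPairRel q₁ q₂))

/-! Under `BΔ`, the polar form of `disc`, the forms make up a quadratic space of signature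
`(2,1)`. The cross product `w` of an intersecting pair is orthogonal to both forms and has
discriminant `BΔ² - D₁D₂ < 0`, so `w` is definite and can be moved by `SL(2,ℤ)` to a reduced form
`[a,b,c]`, `|b| ≤ a ≤ c`. For `p = [A,B,C]` orthogonal to `w`, the identities
`a² disc p + disc w · A² = (aB - bA)²` and `c² disc p + disc w · C² = (cB - bC)²`, together with
`-disc w = 4ac - b² ≥ 3ac`, bound `A`, `B`, `C` in terms of `D₁`, `D₂`. So each class of pairs
has a member among finitely many. -/

open ModularGroup

lemma SL2Z_det_eq_one (γ : SL2Z) : γ.1 0 0 * γ.1 1 1 - γ.1 0 1 * γ.1 1 0 = 1 := by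
  have h := γ.2
  rwa [Matrix.det_fin_two] at h

lemma disc_actForm (γ : SL2Z) (q : BQF) : disc (actForm γ q) = disc q := by
  unfold disc actForm
  linear_combination (q.2.1 ^ 2 - 4 * q.1 * q.2.2) *
    (γ.1 0 0 * γ.1 1 1 - γ.1 0 1 * γ.1 1 0 + 1) * SL2Z_det_eq_one γ

lemma BΔ_actForm (γ : SL2Z) (p q : BQF) : BΔ (actForm γ p) (actForm γ q) = BΔ p q := by
  unfold BΔ actForm
  linear_combination (p.2.1 * q.2.1 - 2 * p.1 * q.2.2 - 2 * q.1 * p.2.2) *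
    (γ.1 0 0 * γ.1 1 1 - γ.1 0 1 * γ.1 1 0 + 1) * SL2Z_det_eq_one γ

lemma actForm_mul (γ δ : SL2Z) (q : BQF) : actForm (γ * δ) q = actForm δ (actForm γ q) := by
  unfold actForm
  simp only [Matrix.SpecialLinearGroup.coe_mul, Matrix.mul_apply, Fin.sum_univ_two]
  refine Prod.ext ?_ (Prod.ext ?_ ?_) <;> ring

lemma disc_eq_of_equivF {q p : BQF} (h : equivF q p) : disc p = disc q := by
  obtain ⟨γ, rfl⟩ := h
  exact disc_actForm γ q

lemma equivF_actForm {q p : BQF} (h : equivF q p) (γ : SL2Z) : equivF q (actForm γ p) := by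
  obtain ⟨δ, rfl⟩ := h
  exact ⟨δ * γ, actForm_mul δ γ q⟩

lemma actForm_T_zpow (t : ℤ) (w : BQF) :
    actForm (T ^ t) w = (w.1, 2 * w.1 * t + w.2.1, w.1 * t ^ 2 + w.2.1 * t + w.2.2) := by
  simp [actForm, coe_T_zpow]

lemma actForm_S (w : BQF) : actForm S w = (w.2.2, -w.2.1, w.1) := by
  simp [actForm]

def IsReducedPosDef (w : BQF) : Prop := 0 < w.1 ∧ |w.2.1| ≤ w.1 ∧ w.1 ≤ w.2.2

lemma exists_abs_actForm_T_zpow_le {w : BQF} (ha : 0 < w.1) :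
    ∃ t : ℤ, |(actForm (T ^ t) w).2.1| ≤ w.1 := by
  refine ⟨-((w.2.1 + w.1) / (2 * w.1)), ?_⟩
  have hmod := Int.emod_add_mul_ediv (w.2.1 + w.1) (2 * w.1)
  have h0 := Int.emod_nonneg (w.2.1 + w.1) (by omega : 2 * w.1 ≠ 0)
  have h1 := Int.emod_lt_of_pos (w.2.1 + w.1) (by omega : 0 < 2 * w.1)
  rw [actForm_T_zpow, abs_le]
  constructor <;> linarith

theorem exists_isReducedPosDef_actForm (w : BQF) (ha : 0 < w.1) (hd : disc w < 0) :
    ∃ γ : SL2Z, IsReducedPosDef (actForm γ w) := by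
  obtain ⟨t, hb⟩ := exists_abs_actForm_T_zpow_le ha
  have ha' : (actForm (T ^ t) w).1 = w.1 := by rw [actForm_T_zpow]
  have hd' : disc (actForm (T ^ t) w) < 0 := by rwa [disc_actForm]
  by_cases hac : (actForm (T ^ t) w).1 ≤ (actForm (T ^ t) w).2.2
  · exact ⟨T ^ t, ha' ▸ ha, ha' ▸ hb, hac⟩
  · have hc : 0 < (actForm (T ^ t) w).2.2 := by
      unfold disc at hd'; nlinarith [sq_nonneg (actForm (T ^ t) w).2.1]
    obtain ⟨γ, hγ⟩ := exists_isReducedPosDef_actForm (actForm S (actForm (T ^ t) w))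
      (by rwa [actForm_S]) (by rwa [disc_actForm])
    exact ⟨T ^ t * S * γ, by rwa [actForm_mul, actForm_mul]⟩
termination_by w.1.toNat
decreasing_by
  rw [actForm_S]
  omega

/-- The cross product of `p` and `q` with respect to the polar form `BΔ` of `disc`. -/
def crossForm (p q : BQF) : BQF :=
  (q.1 * p.2.1 - p.1 * q.2.1, 2 * (p.2.2 * q.1 - p.1 * q.2.2), p.2.2 * q.2.1 - q.2.2 * p.2.1)

lemma BΔ_crossForm_left (p q : BQF) : BΔ (crossForm p q) p = 0 := by
  unfold BΔ crossForm; ring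

lemma BΔ_crossForm_right (p q : BQF) : BΔ (crossForm p q) q = 0 := by
  unfold BΔ crossForm; ring

lemma disc_crossForm (p q : BQF) : disc (crossForm p q) = BΔ p q ^ 2 - disc p * disc q := by
  unfold disc crossForm BΔ; ring

lemma crossForm_swap (p q : BQF) : crossForm q p = -crossForm p q := by
  unfold crossForm
  refine Prod.ext ?_ (Prod.ext ?_ ?_) <;> simp only [Prod.fst_neg, Prod.snd_neg] <;> ring

lemma BΔ_comm (p q : BQF) : BΔ p q = BΔ q p := by
  unfold BΔ; ring

lemma exists_posDef_orthogonal {p q : BQF} (h : BΔ p q ^ 2 < disc p * disc q) :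
    ∃ w : BQF, 0 < w.1 ∧ disc w = BΔ p q ^ 2 - disc p * disc q ∧ BΔ w p = 0 ∧ BΔ w q = 0 := by
  have hne : (crossForm p q).1 ≠ 0 := by
    intro h0
    have hd : disc (crossForm p q) = (crossForm p q).2.1 ^ 2 := by simp [disc, h0]
    rw [disc_crossForm] at hd
    nlinarith [sq_nonneg (crossForm p q).2.1]
  rcases hne.lt_or_gt with hneg | hpos
  · refine ⟨crossForm q p, ?_, ?_, BΔ_crossForm_right q p, BΔ_crossForm_left q p⟩
    · rw [crossForm_swap, Prod.fst_neg]; exact neg_pos.mpr hneg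
    · rw [disc_crossForm, BΔ_comm, mul_comm]
  · exact ⟨crossForm p q, hpos, disc_crossForm p q, BΔ_crossForm_left p q,
      BΔ_crossForm_right p q⟩

def boundedForms (M : ℤ) : Set BQF := {q | q.1 ^ 2 ≤ M ∧ q.2.1 ^ 2 ≤ M ∧ q.2.2 ^ 2 ≤ M}

lemma boundedForms_finite (M : ℤ) : (boundedForms M).Finite := by
  have hI : {x : ℤ | x ^ 2 ≤ M}.Finite :=
    (Set.finite_Icc (-M) M).subset fun x hx =>
      abs_le.mp (Int.natCast_natAbs x ▸ (Int.natAbs_le_self_sq x).trans hx)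
  exact (hI.prod (hI.prod hI)).subset fun q ⟨h₁, h₂, h₃⟩ => ⟨h₁, h₂, h₃⟩

lemma sq_mul_disc_add_disc_mul_sq_fst {w p : BQF} (h : BΔ w p = 0) :
    w.1 ^ 2 * disc p + disc w * p.1 ^ 2 = (w.1 * p.2.1 - w.2.1 * p.1) ^ 2 := by
  unfold BΔ at h; unfold disc
  linear_combination (2 * w.1 * p.1) * h

lemma sq_mul_disc_add_disc_mul_sq_snd {w p : BQF} (h : BΔ w p = 0) :
    w.2.2 ^ 2 * disc p + disc w * p.2.2 ^ 2 = (w.2.2 * p.2.1 - w.2.1 * p.2.2) ^ 2 := by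
  unfold BΔ at h; unfold disc
  linear_combination (2 * w.2.2 * p.2.2) * h

theorem mem_boundedForms_of_orthogonal {w p : BQF} {K : ℤ} (hw : IsReducedPosDef w)
    (hK : -disc w ≤ K) (h : BΔ w p = 0) : p ∈ boundedForms ((3 + K) * disc p) := by
  have hA := sq_mul_disc_add_disc_mul_sq_fst h
  have hC := sq_mul_disc_add_disc_mul_sq_snd h
  obtain ⟨a, b, c⟩ := w
  obtain ⟨A, B, C⟩ := p
  obtain ⟨ha, hb, hac⟩ := hw
  simp only [disc, BΔ] at ha hb hac hA hC hK h ⊢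
  set D := B ^ 2 - 4 * A * C
  set κ := 4 * a * c - b ^ 2
  have hb2 : b ^ 2 ≤ a ^ 2 := sq_le_sq' (abs_le.mp hb).1 (abs_le.mp hb).2
  have hκac : 3 * a * c ≤ κ := by nlinarith
  have hκA : κ * A ^ 2 ≤ a ^ 2 * D := by nlinarith [sq_nonneg (a * B - b * A)]
  have hκC : κ * C ^ 2 ≤ c ^ 2 * D := by nlinarith [sq_nonneg (c * B - b * C)]
  have h3A : 3 * A ^ 2 ≤ D := by
    refine le_of_mul_le_mul_left ?_ (by positivity : 0 < a ^ 2)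
    nlinarith [mul_le_mul_of_nonneg_right (by nlinarith : 3 * a ^ 2 ≤ κ) (sq_nonneg A)]
  have hD0 : 0 ≤ D := by nlinarith [sq_nonneg A]
  have h3C : 3 * C ^ 2 ≤ c * D := by
    refine le_of_mul_le_mul_left ?_ (by omega : 0 < c)
    nlinarith [mul_le_mul_of_nonneg_right hκac (sq_nonneg C),
      mul_le_mul_of_nonneg_right (by nlinarith : 3 * c ≤ 3 * a * c) (sq_nonneg C)]
  have h9C : 9 * C ^ 2 ≤ κ * D := by nlinarith
  have hκK : κ * D ≤ K * D := mul_le_mul_of_nonneg_right (by omega) hD0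
  have hκD : 0 ≤ κ * D := by nlinarith
  refine ⟨by nlinarith, ?_, by nlinarith⟩
  nlinarith [sq_nonneg (A + C)]

theorem exists_actForm_mem_boundedForms {p₁ p₂ : BQF} (h : BΔ p₁ p₂ ^ 2 < disc p₁ * disc p₂) :
    ∃ γ : SL2Z, actForm γ p₁ ∈ boundedForms ((3 + disc p₁ * disc p₂) * disc p₁) ∧
      actForm γ p₂ ∈ boundedForms ((3 + disc p₁ * disc p₂) * disc p₂) := by
  obtain ⟨w, hw, hdw, hw₁, hw₂⟩ := exists_posDef_orthogonal h
  obtain ⟨γ, hγ⟩ := exists_isReducedPosDef_actForm w hw (by rw [hdw]; linarith)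
  have hK : -disc (actForm γ w) ≤ disc p₁ * disc p₂ := by
    rw [disc_actForm, hdw]; nlinarith [sq_nonneg (BΔ p₁ p₂)]
  have h₁ := mem_boundedForms_of_orthogonal (p := actForm γ p₁) hγ hK (by rw [BΔ_actForm, hw₁])
  have h₂ := mem_boundedForms_of_orthogonal (p := actForm γ p₂) hγ hK (by rw [BΔ_actForm, hw₂])
  rw [disc_actForm] at h₁ h₂
  exact ⟨γ, h₁, h₂⟩

lemma Quot.finite_of_exists_rel_mem {α : Type*} {r : α → α → Prop} {s : Set α}
    (hs : s.Finite) (h : ∀ a, ∃ b ∈ s, r a b) : Finite (Quot r) := by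
  have := hs.to_subtype
  refine Finite.of_surjective (fun b : s => Quot.mk r b) ?_
  rintro ⟨a⟩
  obtain ⟨b, hb, hab⟩ := h a
  exact ⟨⟨b, hb⟩, (Quot.sound hab).symm⟩

theorem intPair_quotient_finite_general
    (q₁ q₂ : BQF) :
    Finite (Quot (intPairRel q₁ q₂)) := by
  set M := 3 + disc q₁ * disc q₂
  refine Quot.finite_of_exists_rel_mem
    (s := {x | x.1 ∈ boundedForms (M * disc q₁) ×ˢ boundedForms (M * disc q₂)})
    (((boundedForms_finite _).prod (boundedForms_finite _)).preimage
      Subtype.val_injective.injOn) ?_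
  rintro ⟨⟨p₁, p₂⟩, hp₁, hp₂, hB⟩
  have hd₁ := disc_eq_of_equivF hp₁
  have hd₂ := disc_eq_of_equivF hp₂
  obtain ⟨γ, hγ₁, hγ₂⟩ := exists_actForm_mem_boundedForms (p₁ := p₁) (p₂ := p₂)
    (by rwa [hd₁, hd₂])
  rw [hd₁, hd₂] at hγ₁ hγ₂
  refine ⟨⟨(actForm γ p₁, actForm γ p₂), equivF_actForm hp₁ γ, equivF_actForm hp₂ γ, ?_⟩,
    ⟨hγ₁, hγ₂⟩, γ, rfl, rfl⟩
  rwa [BΔ_actForm]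

/-- finiteness of the intersection number; Proposition 1 of
the paper. The set of simultaneous equivalence classes of intersecting pairs
is finite. -/
theorem intPair_quotient_finite
    (q₁ q₂ : BQF) (h₁ : IsPIBQF q₁) (h₂ : IsPIBQF q₂) :
    Finite (Quot (intPairRel q₁ q₂)) :=
  intPair_quotient_finite_general q₁ q₂
end
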